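/- arXiv:1102.1441 — 5 statements merged into one kernel-verified Lean document; each statement's English description precedes it below -/
import Mathlib

section
/- Let N ≥ 1. For any series–parallel circuit C over probability vectors on N states — a finite binary tree whose leaves are labelled by probability vectors and whose internal nodes are labelled 'series' or 'parallel', evaluated recursively by val(leaf p) = p, val(series node) = (val of left subtree) ∗ (val of right subtree), and val(parallel node) = (val of left subtree) ⊕ (val of right subtree) — let the dual circuit C̄ be obtained from C by replacing every leaf label p with its reversal rev p (where (rev p) i = p (N−1−i)) and exchanging the labels 'series' and 'parallel' at every internal node. Then val(C̄) = rev (val C), i.e. val(C̄) i = val(C) (N−1−i) for every state i. -/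
noncomputable section

/-- Series composition: distribution of `min` of two independent states. -/
def smin {N : ℕ} (p q : Fin N → ℝ) : Fin N → ℝ :=
  fun k => ∑ i, ∑ j, if min i j = k then p i * q j else 0

/-- Parallel composition: distribution of `max` of two independent states. -/
def smax {N : ℕ} (p q : Fin N → ℝ) : Fin N → ℝ :=
  fun k => ∑ i, ∑ j, if max i j = k then p i * q j else 0

/-- A probability vector on `N` states. -/
def IsProbVec {N : ℕ} (p : Fin N → ℝ) : Prop :=
  (∀ i, 0 ≤ p i) ∧ ∑ i, p i = 1

/-- Reversal of a vector: `(rev p) i = p (N-1-i)`. -/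
def rev {N : ℕ} (p : Fin N → ℝ) : Fin N → ℝ := fun i => p i.rev

/-- A series-parallel circuit: a finite binary tree with leaves labelled by
vectors and internal nodes labelled `series` or `parallel`. -/
inductive Circuit (N : ℕ) where
  | leaf (p : Fin N → ℝ)
  | series (l r : Circuit N)
  | parallel (l r : Circuit N)

/-- The value (realized distribution) of a circuit. -/
def Circuit.val {N : ℕ} : Circuit N → (Fin N → ℝ)
  | .leaf p => p
  | .series l r => smin l.val r.val
  | .parallel l r => smax l.val r.val

/-- The dual circuit: reverse every leaf label and exchange series/parallel. -/
def Circuit.dual {N : ℕ} : Circuit N → Circuit N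
  | .leaf p => .leaf (rev p)
  | .series l r => .parallel l.dual r.dual
  | .parallel l r => .series l.dual r.dual

/-- All leaves of the circuit are labelled by probability vectors. -/
def Circuit.probLeaves {N : ℕ} : Circuit N → Prop
  | .leaf p => IsProbVec p
  | .series l r => l.probLeaves ∧ r.probLeaves
  | .parallel l r => l.probLeaves ∧ r.probLeaves

lemma rev_rev {N : ℕ} (p : Fin N → ℝ) : rev (rev p) = p :=
  funext fun i => congrArg p i.rev_rev

/-- Reindex both sums by the antitone involution `Fin.rev`, which turns `max` into `min`. -/
lemma smax_rev {N : ℕ} (p q : Fin N → ℝ) : smax (rev p) (rev q) = rev (smin p q) := by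
  funext k
  calc smax (rev p) (rev q) k
      = ∑ i, ∑ j, if max i.rev j.rev = k then p i * q j else 0 := by
        simp only [smax, rev]
        rw [← Equiv.sum_comp Fin.revPerm]
        refine Finset.sum_congr rfl fun i _ => ?_
        rw [← Equiv.sum_comp Fin.revPerm]
        simp only [Fin.revPerm_apply, Fin.rev_rev]
    _ = rev (smin p q) k := by
        simp only [smin, rev, ← Fin.rev_anti.map_min, Fin.rev_eq_iff]

lemma smin_rev {N : ℕ} (p q : Fin N → ℝ) : smin (rev p) (rev q) = rev (smax p q) := by
  rw [← rev_rev (smin (rev p) (rev q)), ← smax_rev, rev_rev, rev_rev]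

lemma Circuit.val_dual {N : ℕ} (C : Circuit N) : C.dual.val = rev C.val := by
  induction C with
  | leaf p => rfl
  | series l r hl hr => rw [dual, val, val, hl, hr, smax_rev]
  | parallel l r hl hr => rw [dual, val, val, hl, hr, smin_rev]

theorem duality_general (N : ℕ) (C : Circuit N) :
    C.dual.val = rev C.val ∧ ∀ i : Fin N, C.dual.val i = C.val i.rev :=
  ⟨C.val_dual, fun i => congrFun C.val_dual i⟩

/-- Duality Theorem: the dual circuit realizes the reversed distribution. -/
theorem duality (N : ℕ) (hN : 1 ≤ N) (C : Circuit N) (hC : C.probLeaves) :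
    C.dual.val = rev C.val ∧ ∀ i : Fin N, C.dual.val i = C.val i.rev :=
  duality_general N C
end
end

section
/- For every integer n ≥ 1 and all nonnegative integers a, b, c with a + b + c = 2^n, the probability vector (a/2^n, b/2^n, c/2^n) on 3 states is realizable from the switch set S = {(1/2, 0, 1/2)} with at most 2n − 1 pswitches. -/
noncomputable section

/-- The point mass at state `s`. -/
def delta {N : ℕ} (s : Fin N) : Fin N → ℝ := fun i => if i = s then 1 else 0

/-- `Realizable S p m`: the vector `p` is obtained from point masses (0 pswitches)
and elements of the switch set `S` (1 pswitch each) by series and parallel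
compositions, using `m` pswitches in total. -/
inductive Realizable {N : ℕ} (S : Set (Fin N → ℝ)) : (Fin N → ℝ) → ℕ → Prop
  | point (s : Fin N) : Realizable S (delta s) 0
  | single {p : Fin N → ℝ} : p ∈ S → Realizable S p 1
  | series {p q : Fin N → ℝ} {a b : ℕ} :
      Realizable S p a → Realizable S q b → Realizable S (smin p q) (a + b)
  | parallel {p q : Fin N → ℝ} {a b : ℕ} :
      Realizable S p a → Realizable S q b → Realizable S (smax p q) (a + b)


/-!
Write a target with numerators `(a, b, c)` over `2 ^ (n + 1)`. If `a ≥ 2 ^ n` (resp.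
`c ≥ 2 ^ n`), the target is the series (resp. parallel) composition of the switch with the
vector of numerators `(a - 2 ^ n, b, c)` (resp. `(a, b, c - 2 ^ n)`) over `2 ^ n`, costing one
pswitch. Otherwise the parallel composition of the switch with the two-state vector
`(a, 2 ^ n - a, 0) / 2 ^ n` puts mass `1 / 2` on state `2`, and its series composition with
`(0, 2 ^ n - c, c) / 2 ^ n` scales that mass to `c / 2 ^ (n + 1)` while leaving the mass on
state `0` alone. Two-state dyadic vectors with denominator `2 ^ n` need only `n` pswitches, so
this costs `(n + 1) + n = 2 (n + 1) - 1`.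
-/

def RealizableWithin {N : ℕ} (S : Set (Fin N → ℝ)) (p : Fin N → ℝ) (k : ℕ) : Prop :=
  ∃ m ≤ k, Realizable S p m

section General

variable {N : ℕ} {S : Set (Fin N → ℝ)} {p q : Fin N → ℝ} {k l : ℕ}

theorem realizableWithin_delta (s : Fin N) : RealizableWithin S (delta s) 0 :=
  ⟨0, le_rfl, .point s⟩

theorem realizableWithin_of_mem (hp : p ∈ S) : RealizableWithin S p 1 :=
  ⟨1, le_rfl, .single hp⟩

theorem RealizableWithin.mono (hp : RealizableWithin S p k) (hkl : k ≤ l) :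
    RealizableWithin S p l :=
  let ⟨m, hm, hr⟩ := hp; ⟨m, hm.trans hkl, hr⟩

theorem RealizableWithin.series (hp : RealizableWithin S p k) (hq : RealizableWithin S q l) :
    RealizableWithin S (smin p q) (k + l) :=
  let ⟨m₁, hm₁, hr₁⟩ := hp; let ⟨m₂, hm₂, hr₂⟩ := hq
  ⟨m₁ + m₂, Nat.add_le_add hm₁ hm₂, .series hr₁ hr₂⟩

theorem RealizableWithin.parallel (hp : RealizableWithin S p k) (hq : RealizableWithin S q l) :
    RealizableWithin S (smax p q) (k + l) :=
  let ⟨m₁, hm₁, hr₁⟩ := hp; let ⟨m₂, hm₂, hr₂⟩ := hq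
  ⟨m₁ + m₂, Nat.add_le_add hm₁ hm₂, .parallel hr₁ hr₂⟩

end General

theorem smin_vec3 (x y z x' y' z' : ℝ) :
    smin ![x, y, z] ![x', y', z'] =
      ![x * x' + x * y' + x * z' + y * x' + z * x', y * y' + y * z' + z * y', z * z'] := by
  ext k
  fin_cases k <;> simp [smin, Fin.sum_univ_three]

theorem smax_vec3 (x y z x' y' z' : ℝ) :
    smax ![x, y, z] ![x', y', z'] =
      ![x * x', y * y' + x * y' + y * x', z * z' + z * x' + z * y' + x * z' + y * z'] := by
  ext k
  fin_cases k <;> simp [smax, Fin.sum_univ_three] <;> ring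

theorem delta_fin_three_one : (delta 1 : Fin 3 → ℝ) = ![0, 1, 0] := by
  ext k
  fin_cases k <;> simp [delta]

def halfSwitch : Fin 3 → ℝ := ![1 / 2, 0, 1 / 2]

def dyadicVec (n a b c : ℕ) : Fin 3 → ℝ := ![a / 2 ^ n, b / 2 ^ n, c / 2 ^ n]

theorem smin_dyadicVec_halfSwitch {n a b c : ℕ} (h : a + b + c = 2 ^ n) :
    smin (dyadicVec n a b c) halfSwitch = dyadicVec (n + 1) (a + 2 ^ n) b c := by
  have hr : (a + b + c : ℝ) = 2 ^ n := by exact_mod_cast h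
  rw [dyadicVec, halfSwitch, smin_vec3, dyadicVec]
  simp only [Matrix.vecCons_inj, and_true]
  refine ⟨?_, by ring, by ring⟩
  push_cast
  rw [pow_succ]
  field_simp
  linear_combination hr

theorem smax_dyadicVec_halfSwitch {n a b c : ℕ} (h : a + b + c = 2 ^ n) :
    smax (dyadicVec n a b c) halfSwitch = dyadicVec (n + 1) a b (c + 2 ^ n) := by
  have hr : (a + b + c : ℝ) = 2 ^ n := by exact_mod_cast h
  rw [dyadicVec, halfSwitch, smax_vec3, dyadicVec]
  simp only [Matrix.vecCons_inj, and_true]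
  refine ⟨by ring, by ring, ?_⟩
  push_cast
  rw [pow_succ]
  field_simp
  linear_combination hr

theorem smin_dyadicVec_delta_one (n a c : ℕ) :
    smin (dyadicVec n a 0 c) (delta 1) = dyadicVec n a c 0 := by
  rw [dyadicVec, delta_fin_three_one, smin_vec3, dyadicVec]
  ext k
  fin_cases k <;> simp

theorem smax_dyadicVec_delta_one (n a c : ℕ) :
    smax (dyadicVec n a 0 c) (delta 1) = dyadicVec n 0 a c := by
  rw [dyadicVec, delta_fin_three_one, smax_vec3, dyadicVec]
  ext k
  fin_cases k <;> simp

theorem smin_smax_halfSwitch_dyadicVec {n a a' b c c' : ℕ} (ha : a + a' = 2 ^ n)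
    (hc : c' + c = 2 ^ n) (h : a + b + c = 2 ^ (n + 1)) :
    smin (smax (dyadicVec n a a' 0) halfSwitch) (dyadicVec n 0 c' c) =
      dyadicVec (n + 1) a b c := by
  have ha' : (a + a' : ℝ) = 2 ^ n := by exact_mod_cast ha
  have hc' : (c' + c : ℝ) = 2 ^ n := by exact_mod_cast hc
  have hr : (a + b + c : ℝ) = 2 ^ (n + 1) := by exact_mod_cast h
  rw [smax_dyadicVec_halfSwitch (by simpa using ha), zero_add, dyadicVec, dyadicVec, smin_vec3,
    dyadicVec]
  simp only [Matrix.vecCons_inj, and_true]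
  push_cast
  refine ⟨?_, ?_, ?_⟩
  all_goals field_simp
  · linear_combination (a : ℝ) * hc'
  · linear_combination (a' : ℝ) * hc' + 2 ^ n * (ha' + hc' - hr)

theorem realizableWithin_dyadicVec_zero {a b c : ℕ} (h : a + b + c = 2 ^ 0) :
    RealizableWithin {halfSwitch} (dyadicVec 0 a b c) 0 := by
  obtain ⟨s, hs⟩ : ∃ s : Fin 3, dyadicVec 0 a b c = delta s := by
    rw [pow_zero] at h
    obtain ⟨rfl, rfl, rfl⟩ | ⟨rfl, rfl, rfl⟩ | ⟨rfl, rfl, rfl⟩ :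
        (a = 1 ∧ b = 0 ∧ c = 0) ∨ (a = 0 ∧ b = 1 ∧ c = 0) ∨
          (a = 0 ∧ b = 0 ∧ c = 1) := by
      omega
    · exact ⟨0, by ext k; fin_cases k <;> simp [dyadicVec, delta]⟩
    · exact ⟨1, by ext k; fin_cases k <;> simp [dyadicVec, delta]⟩
    · exact ⟨2, by ext k; fin_cases k <;> simp [dyadicVec, delta]⟩
  exact hs ▸ realizableWithin_delta s

theorem RealizableWithin.dyadicVec_succ_of_large {n a b c k : ℕ} (h : a + b + c = 2 ^ (n + 1))
    (hlarge : 2 ^ n ≤ a ∨ 2 ^ n ≤ c)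
    (ih : ∀ a' c', a' + b + c' = 2 ^ n →
      RealizableWithin {halfSwitch} (dyadicVec n a' b c') k) :
    RealizableWithin {halfSwitch} (dyadicVec (n + 1) a b c) (k + 1) := by
  rw [pow_succ] at h
  rcases hlarge with ha | hc
  · obtain ⟨a', rfl⟩ := Nat.exists_eq_add_of_le' ha
    have h' : a' + b + c = 2 ^ n := by omega
    rw [← smin_dyadicVec_halfSwitch h']
    exact (ih a' c h').series (realizableWithin_of_mem rfl)
  · obtain ⟨c', rfl⟩ := Nat.exists_eq_add_of_le' hc
    have h' : a + b + c' = 2 ^ n := by omega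
    rw [← smax_dyadicVec_halfSwitch h']
    exact (ih a c' h').parallel (realizableWithin_of_mem rfl)

theorem realizableWithin_dyadicVec_middle_zero :
    ∀ {n a c : ℕ}, a + c = 2 ^ n → RealizableWithin {halfSwitch} (dyadicVec n a 0 c) n
  | 0, _, _, h => realizableWithin_dyadicVec_zero (by simpa using h)
  | n + 1, a, c, h =>
    RealizableWithin.dyadicVec_succ_of_large h (by rw [pow_succ] at h; omega)
      fun _ _ h' => realizableWithin_dyadicVec_middle_zero h'

theorem realizableWithin_dyadicVec_last_zero {n a b : ℕ} (h : a + b = 2 ^ n) :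
    RealizableWithin {halfSwitch} (dyadicVec n a b 0) n := by
  rw [← smin_dyadicVec_delta_one]
  exact (realizableWithin_dyadicVec_middle_zero h).series (realizableWithin_delta 1)

theorem realizableWithin_dyadicVec_first_zero {n b c : ℕ} (h : b + c = 2 ^ n) :
    RealizableWithin {halfSwitch} (dyadicVec n 0 b c) n := by
  rw [← smax_dyadicVec_delta_one]
  exact (realizableWithin_dyadicVec_middle_zero h).parallel (realizableWithin_delta 1)

theorem realizableWithin_dyadicVec_of_le {n a b c : ℕ} (h : a + b + c = 2 ^ (n + 1))
    (ha : a ≤ 2 ^ n) (hc : c ≤ 2 ^ n) :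
    RealizableWithin {halfSwitch} (dyadicVec (n + 1) a b c) (2 * n + 1) := by
  obtain ⟨a', ha'⟩ := Nat.exists_eq_add_of_le ha
  obtain ⟨c', hc'⟩ := Nat.exists_eq_add_of_le' hc
  rw [← smin_smax_halfSwitch_dyadicVec ha'.symm hc'.symm h]
  have hleft := (realizableWithin_dyadicVec_last_zero ha'.symm).parallel
    (realizableWithin_of_mem (S := {halfSwitch}) rfl)
  exact (hleft.series (realizableWithin_dyadicVec_first_zero hc'.symm)).mono (by omega)

theorem realizableWithin_dyadicVec :
    ∀ {n a b c : ℕ}, a + b + c = 2 ^ n →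
      RealizableWithin {halfSwitch} (dyadicVec n a b c) (2 * n - 1)
  | 0, _, _, _, h => realizableWithin_dyadicVec_zero h
  | n + 1, a, b, c, h => by
    by_cases hsmall : a ≤ 2 ^ n ∧ c ≤ 2 ^ n
    · exact (realizableWithin_dyadicVec_of_le h hsmall.1 hsmall.2).mono (by omega)
    · exact (RealizableWithin.dyadicVec_succ_of_large h (by omega)
        fun _ _ h' => realizableWithin_dyadicVec h').mono (by omega)

theorem binary_three_state_general (n : ℕ) (a b c : ℕ) (h : a + b + c = 2 ^ n) :
    ∃ m ≤ 2 * n - 1,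
      Realizable
        ({fun i : Fin 3 => if i = 0 then (1 : ℝ) / 2 else if i = 2 then (1 : ℝ) / 2 else 0} :
          Set (Fin 3 → ℝ))
        (fun i : Fin 3 =>
          if i = 0 then (a : ℝ) / 2 ^ n else if i = 1 then (b : ℝ) / 2 ^ n else (c : ℝ) / 2 ^ n)
        m := by
  have hswitch : (fun i : Fin 3 =>
      if i = 0 then (1 : ℝ) / 2 else if i = 2 then (1 : ℝ) / 2 else 0) = halfSwitch := by
    ext i; fin_cases i <;> simp [halfSwitch]
  have htarget : (fun i : Fin 3 =>
      if i = 0 then (a : ℝ) / 2 ^ n else if i = 1 then (b : ℝ) / 2 ^ n else (c : ℝ) / 2 ^ n)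
      = dyadicVec n a b c := by
    ext i; fin_cases i <;> simp [dyadicVec]
  rw [hswitch, htarget]
  exact realizableWithin_dyadicVec h

/-- Binary 3-state distributions: every `(a/2^n, b/2^n, c/2^n)` is realizable from
the switch set `{(1/2, 0, 1/2)}` using at most `2n - 1` pswitches. -/
theorem binary_three_state (n : ℕ) (hn : 1 ≤ n) (a b c : ℕ) (h : a + b + c = 2 ^ n) :
    ∃ m ≤ 2 * n - 1,
      Realizable
        ({fun i : Fin 3 => if i = 0 then (1 : ℝ) / 2 else if i = 2 then (1 : ℝ) / 2 else 0} :
          Set (Fin 3 → ℝ))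
        (fun i : Fin 3 =>
          if i = 0 then (a : ℝ) / 2 ^ n else if i = 1 then (b : ℝ) / 2 ^ n else (c : ℝ) / 2 ^ n)
        m :=
  binary_three_state_general n a b c h
end
end

section
/- For all integers N ≥ 1 and n ≥ 0: if n ≥ ⌈log₂(N+1)⌉ then f(n, N+1) − f(n, N) = n − ⌈log₂ N⌉, and if n ≤ ⌈log₂ N⌉ then f(n, N+1) − f(n, N) = 0. In particular, for each fixed n the difference f(n, N+1) − f(n, N) is nonincreasing in N. -/
/-!
Everything follows from the closed form
`f(n, N+1) - f(n, N) = n ∸ ⌈log₂ N⌉` (truncated subtraction) for `N ≥ 1`. Below `⌈log₂ N⌉` both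
values are `2^n - 1`. Above it, if `⌈log₂ (N+1)⌉ = ⌈log₂ N⌉` only the slope `N - 1` grows by one;
otherwise `N = 2^⌈log₂ N⌉` and `⌈log₂⌉` grows by exactly one, and the loss of one unit of slope is
paid for by the doubling of `2^⌈log₂ N⌉`.
-/

/-- The complexity function `f(n,N)`: `2^n - 1` for `n ≤ ⌈log₂ N⌉` and
`(N-1)(n - ⌈log₂ N⌉) + 2^{⌈log₂ N⌉} - 1` for `n ≥ ⌈log₂ N⌉`. -/
def f (n N : ℕ) : ℕ :=
  if n ≤ Nat.clog 2 N then 2 ^ n - 1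
  else (N - 1) * (n - Nat.clog 2 N) + 2 ^ (Nat.clog 2 N) - 1

open Nat

theorem Nat.clog_succ_le_succ_clog {b : ℕ} (hb : 1 < b) (n : ℕ) :
    clog b (n + 1) ≤ clog b n + 1 := by
  rw [clog_le_iff_le_pow hb, pow_succ]
  have hpos : 1 ≤ b ^ clog b n := one_le_pow _ _ (zero_lt_one.trans hb)
  calc n + 1 ≤ b ^ clog b n + 1 := Nat.succ_le_succ (le_pow_clog hb n)
    _ ≤ b ^ clog b n * 2 := by omega
    _ ≤ b ^ clog b n * b := Nat.mul_le_mul_left _ hb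

theorem f_eq_of_le_clog {n N : ℕ} (h : n ≤ clog 2 N) : (f n N : ℤ) = 2 ^ n - 1 := by
  rw [f, if_pos h]
  push_cast [Nat.one_le_two_pow]
  ring

theorem f_eq_of_clog_le {n N : ℕ} (hN : 1 ≤ N) (h : clog 2 N ≤ n) :
    (f n N : ℤ) = ((N : ℤ) - 1) * ((n : ℤ) - clog 2 N) + 2 ^ clog 2 N - 1 := by
  rcases h.eq_or_lt with h | h
  · rw [f_eq_of_le_clog h.ge, h]
    ring
  · rw [f, if_neg h.not_ge]
    have hpos : 1 ≤ (N - 1) * (n - clog 2 N) + 2 ^ clog 2 N :=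
      Nat.one_le_two_pow.trans (le_add_left _ _)
    push_cast [hpos, hN, h.le]
    ring

theorem f_succ_sub_f (n : ℕ) {N : ℕ} (hN : 1 ≤ N) :
    (f n (N + 1) : ℤ) - f n N = ((n - clog 2 N : ℕ) : ℤ) := by
  have hmono : clog 2 N ≤ clog 2 (N + 1) := clog_mono_right 2 N.le_succ
  rcases le_or_gt n (clog 2 N) with h | h
  · rw [f_eq_of_le_clog (h.trans hmono), f_eq_of_le_clog h, Nat.sub_eq_zero_of_le h]
    simp
  have hsucc : clog 2 (N + 1) ≤ n := (clog_succ_le_succ_clog one_lt_two N).trans h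
  rw [f_eq_of_clog_le (by omega) hsucc, f_eq_of_clog_le hN h.le, Nat.cast_sub h.le]
  rcases hmono.eq_or_lt with heq | hlt
  · rw [← heq]
    push_cast
    ring
  · have hpow : ((2 : ℤ) ^ clog 2 N) = N := by
      exact_mod_cast (clog_lt_clog_succ_iff one_lt_two).1 hlt
    rw [le_antisymm (clog_succ_le_succ_clog one_lt_two N) hlt]
    push_cast
    linear_combination hpow

/-- The discrete derivative of `f` in `N`: it equals `n - ⌈log₂ N⌉` when
`n ≥ ⌈log₂(N+1)⌉` and `0` when `n ≤ ⌈log₂ N⌉`; in particular, for fixed `n`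
it is nonincreasing in `N`. -/
theorem f_delta (n N : ℕ) (hN : 1 ≤ N) :
    (Nat.clog 2 (N + 1) ≤ n →
      (f n (N + 1) : ℤ) - (f n N : ℤ) = (n : ℤ) - (Nat.clog 2 N : ℤ)) ∧
    (n ≤ Nat.clog 2 N → (f n (N + 1) : ℤ) - (f n N : ℤ) = 0) ∧
    (∀ M : ℕ, N ≤ M →
      (f n (M + 1) : ℤ) - (f n M : ℤ) ≤ (f n (N + 1) : ℤ) - (f n N : ℤ)) := by
  refine ⟨fun h => ?_, fun h => ?_, fun M hM => ?_⟩
  · rw [f_succ_sub_f n hN, Nat.cast_sub ((clog_mono_right 2 N.le_succ).trans h)]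
  · rw [f_succ_sub_f n hN, Nat.sub_eq_zero_of_le h, Nat.cast_zero]
  · rw [f_succ_sub_f n (hN.trans hM), f_succ_sub_f n hN]
    exact_mod_cast Nat.sub_le_sub_left (clog_mono_right 2 hM) n
end

section
/- For all integers n ≥ 1 and N ≥ 2, f(n,N) = (max over integers i with 1 ≤ i ≤ ⌈N/2⌉ of f(n−1, i) + f(n−1, N−i+1)) + 1, and the maximum is attained at i = ⌈N/2⌉; that is, f(n,N) = f(n−1, ⌈N/2⌉) + f(n−1, ⌊N/2⌋ + 1) + 1. -/
/-!
Write `L = ⌈log₂ N⌉`. The value `f m N` is `2^m - 1` while `m ≤ L` and affine in `N` with slope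
`m - L` beyond, the two branches agreeing at `m = L`; hence `f m (N + 1) - f m N = m - L`
(truncated). Since `⌈log₂ N⌉ = ⌈log₂ ⌈N/2⌉⌉ + 1`, both sides of the recursion grow by the same
amount when `N` increases, so it follows by induction from `N = 2`. The differences decrease in `N`,
hence `i ↦ f(n-1, i) + f(n-1, N-i+1)` increases on `[1, ⌈N/2⌉]` and is maximal at `⌈N/2⌉`.
-/

lemma f_of_le_clog {m N : ℕ} (h : m ≤ Nat.clog 2 N) : f m N = 2 ^ m - 1 := by
  simp [f, h]

lemma f_of_clog_le {m N : ℕ} (h : Nat.clog 2 N ≤ m) :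
    f m N = (N - 1) * (m - Nat.clog 2 N) + 2 ^ Nat.clog 2 N - 1 := by
  unfold f
  split_ifs with h'
  · obtain rfl : m = Nat.clog 2 N := le_antisymm h' h
    simp
  · rfl

lemma f_one (m : ℕ) : f m 1 = 0 := by
  rw [f_of_clog_le (by simp)]
  simp

lemma f_succ (m : ℕ) {N : ℕ} (hN : 1 ≤ N) : f m (N + 1) = f m N + (m - Nat.clog 2 N) := by
  obtain ⟨k, rfl⟩ : ∃ k, N = k + 1 := ⟨N - 1, by omega⟩
  set L := Nat.clog 2 (k + 1) with hL
  have hkL : k + 1 ≤ 2 ^ L := Nat.le_pow_clog one_lt_two _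
  have hLL' : L ≤ Nat.clog 2 (k + 1 + 1) := Nat.clog_mono_right 2 (by omega)
  rcases le_or_gt m L with hm | hm
  · rw [f_of_le_clog (N := k + 1) hm, f_of_le_clog (N := k + 1 + 1) (hm.trans hLL')]
    omega
  obtain ⟨d, rfl⟩ : ∃ d, m = L + 1 + d := ⟨m - L - 1, by omega⟩
  rw [f_of_clog_le (N := k + 1) (by omega), Nat.add_sub_cancel,
    show L + 1 + d - L = d + 1 by omega]
  by_cases hpow : 2 ^ L = k + 1
  · have hL' : Nat.clog 2 (k + 1 + 1) = L + 1 := by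
      refine le_antisymm (Nat.clog_le_of_le_pow (by rw [pow_succ]; omega)) ?_
      exact (Nat.clog_lt_clog_succ_iff one_lt_two).2 hpow
    rw [f_of_clog_le (by omega), hL', Nat.add_sub_cancel, show L + 1 + d - (L + 1) = d by omega,
      pow_succ, hpow]
    have hdist₁ : (k + 1) * d = k * d + d := by ring
    have hdist₂ : k * (d + 1) = k * d + k := by ring
    omega
  · have hL' : Nat.clog 2 (k + 1 + 1) = L :=
      ((Nat.clog_eq_clog_succ_iff one_lt_two).2 hpow).symm
    rw [f_of_clog_le (by omega), hL', Nat.add_sub_cancel, show L + 1 + d - L = d + 1 by omega]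
    have hdist : (k + 1) * (d + 1) = k * (d + 1) + d + 1 := by ring
    rw [← hL]
    omega

lemma f_succ_left (m : ℕ) {N : ℕ} (hN : 2 ≤ N) :
    f (m + 1) N = f m ((N + 1) / 2) + f m (N / 2 + 1) + 1 := by
  induction N, hN using Nat.le_induction with
  | base =>
    rw [show (2 + 1) / 2 = 1 from rfl, show 2 / 2 + 1 = 1 + 1 from rfl, f_succ _ le_rfl,
      f_succ _ le_rfl, f_one, f_one, Nat.clog_one_right]
    omega
  | succ N hN ih =>
    have hclog : Nat.clog 2 N = Nat.clog 2 ((N + 1) / 2) + 1 := by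
      rw [Nat.clog_of_two_le one_lt_two hN]
      rfl
    -- `⌈(N+1)/2⌉ = ⌊N/2⌋ + 1` and `⌊(N+1)/2⌋ + 1 = ⌈N/2⌉ + 1`: exactly one argument moves up by one.
    rw [show (N + 1 + 1) / 2 = N / 2 + 1 by omega, f_succ _ (by omega), ih, hclog,
      f_succ m (N := (N + 1) / 2) (by omega)]
    omega

lemma f_split_le_succ (m : ℕ) {N i : ℕ} (hi : 1 ≤ i) (hiN : 2 * (i + 1) ≤ N + 1) :
    f m i + f m (N - i + 1) ≤ f m (i + 1) + f m (N - (i + 1) + 1) := by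
  rw [show N - i + 1 = N - (i + 1) + 1 + 1 by omega, f_succ m hi, f_succ m (by omega)]
  have := Nat.clog_mono_right 2 (show i ≤ N - (i + 1) + 1 by omega)
  omega

lemma f_split_monotoneOn (m N : ℕ) :
    MonotoneOn (fun i => f m i + f m (N - i + 1)) (Set.Icc 1 ((N + 1) / 2)) :=
  monotoneOn_of_le_add_one Set.ordConnected_Icc fun _ _ hi hi' =>
    f_split_le_succ m hi.1 (by have := hi'.2; omega)

lemma MonotoneOn.finset_sup_Icc {α β : Type*} [PartialOrder α] [LocallyFiniteOrder α]
    [SemilatticeSup β] [OrderBot β] {g : α → β} {a b : α} (hg : MonotoneOn g (Set.Icc a b))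
    (hab : a ≤ b) : (Finset.Icc a b).sup g = g b := by
  have hb : b ∈ Finset.Icc a b := Finset.right_mem_Icc.2 hab
  refine le_antisymm (Finset.sup_le fun i hi => ?_) (Finset.le_sup hb)
  exact hg (Finset.coe_Icc a b ▸ hi) (Finset.coe_Icc a b ▸ hb) (Finset.mem_Icc.1 hi).2

/-- The recursion for `f`: `f(n,N)` is one more than the maximum of
`f(n-1,i) + f(n-1,N-i+1)` over `1 ≤ i ≤ ⌈N/2⌉`, and the maximum is attained at
`i = ⌈N/2⌉` (note `⌈N/2⌉ = (N+1)/2` and `N - ⌈N/2⌉ + 1 = ⌊N/2⌋ + 1`). -/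
theorem f_recursion (n N : ℕ) (hn : 1 ≤ n) (hN : 2 ≤ N) :
    f n N = (Finset.Icc 1 ((N + 1) / 2)).sup (fun i => f (n - 1) i + f (n - 1) (N - i + 1)) + 1 ∧
    f n N = f (n - 1) ((N + 1) / 2) + f (n - 1) (N / 2 + 1) + 1 := by
  obtain ⟨m, rfl⟩ : ∃ m, n = m + 1 := ⟨n - 1, by omega⟩
  rw [Nat.add_sub_cancel, (f_split_monotoneOn m N).finset_sup_Icc (by omega),
    show N - (N + 1) / 2 + 1 = N / 2 + 1 by omega]
  exact ⟨f_succ_left m hN, f_succ_left m hN⟩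
end

section
/- (Block-Interval Construction.) Let N ≥ 1, let p be a probability vector on N states, let q be a real number with 0 < q < 1, and let k be an index with ∑_{i<k} p i ≤ q and q ≤ ∑_{i≤k} p i. Define probability vectors on N states: c with c 0 = q, c (N−1) = 1−q, and 0 elsewhere; L with L i = p i / q for i < k, L k = (q − ∑_{i<k} p i)/q, and L i = 0 for i > k; and R with R i = 0 for i < k, R k = (∑_{i≤k} p i − q)/(1−q), and R i = p i/(1−q) for i > k. Then p = L ⊕ (c ∗ R) and p = (L ⊕ c) ∗ R. -/
/-!
Both compositions are bilinear, and against a point mass at the bottom or top state they act as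
the identity or collapse to that point mass (`min ⊤ j = j`, `min ⊥ j = ⊥`, and dually for `max`).
Writing the cut switch as `c = q δ₀ + (1 - q) δ_last` therefore gives `c ∗ R = q δ₀ + (1 - q) R`
and `L ⊕ c = q L + (1 - q) δ_last`. Since `L` lives on the states `≤ k` and `R` on the states
`≥ k`, we have `L ⊕ R = R` and `L ∗ R = L`, so both sides reduce to `q L + (1 - q) R`, which is `p`.
-/

noncomputable section

open Finset

section Composition

variable {N : ℕ}

theorem smin_add_left (f g h : Fin N → ℝ) : smin (f + g) h = smin f h + smin g h := by
  ext m
  simp only [smin, Pi.add_apply, add_mul, ← sum_add_distrib, ite_add_ite, add_zero]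

theorem smin_smul_left (a : ℝ) (f g : Fin N → ℝ) : smin (a • f) g = a • smin f g := by
  ext m
  simp only [smin, Pi.smul_apply, smul_eq_mul, mul_sum, mul_ite, mul_zero, mul_assoc]

theorem smax_add_right (f g h : Fin N → ℝ) : smax f (g + h) = smax f g + smax f h := by
  ext m
  simp only [smax, Pi.add_apply, mul_add, ← sum_add_distrib, ite_add_ite, add_zero]

theorem smax_smul_right (a : ℝ) (f g : Fin N → ℝ) : smax f (a • g) = a • smax f g := by
  ext m
  simp only [smax, Pi.smul_apply, smul_eq_mul, mul_sum, mul_ite, mul_zero, mul_left_comm a]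

theorem smax_single_right_apply (f : Fin N → ℝ) (a m : Fin N) :
    smax f (Pi.single a 1) m = ∑ i, if max i a = m then f i else 0 := by
  refine sum_congr rfl fun i _ => ?_
  rw [Fintype.sum_eq_single a fun j hj => by simp [hj]]
  simp

theorem smin_single_left_apply (g : Fin N → ℝ) (a m : Fin N) :
    smin (Pi.single a 1) g m = ∑ j, if min a j = m then g j else 0 := by
  rw [smin, Fintype.sum_eq_single a fun i hi => sum_eq_zero fun j _ => by simp [hi]]
  simp

theorem smax_single_of_isBot {a : Fin N} (ha : IsBot a) (f : Fin N → ℝ) :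
    smax f (Pi.single a 1) = f := by
  ext m
  simp [smax_single_right_apply, max_eq_left (ha _)]

theorem smax_single_of_isTop {a : Fin N} (ha : IsTop a) (f : Fin N → ℝ) :
    smax f (Pi.single a 1) = (∑ i, f i) • Pi.single a 1 := by
  ext m
  simp [smax_single_right_apply, max_eq_right (ha _), Pi.single_apply, eq_comm, sum_ite_irrel]

theorem smin_single_of_isTop {a : Fin N} (ha : IsTop a) (g : Fin N → ℝ) :
    smin (Pi.single a 1) g = g := by
  ext m
  simp [smin_single_left_apply, min_eq_right (ha _)]

theorem smin_single_of_isBot {a : Fin N} (ha : IsBot a) (g : Fin N → ℝ) :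
    smin (Pi.single a 1) g = (∑ j, g j) • Pi.single a 1 := by
  ext m
  simp [smin_single_left_apply, min_eq_left (ha _), Pi.single_apply, eq_comm, sum_ite_irrel]

theorem smax_eq_right_of_support_le {f g : Fin N → ℝ} (hfg : ∀ i j, f i ≠ 0 → g j ≠ 0 → i ≤ j)
    (hf : ∑ i, f i = 1) : smax f g = g := by
  ext m
  have hterm : ∀ i j, (if max i j = m then f i * g j else 0) = if j = m then f i * g j else 0 := by
    intro i j
    by_cases hfi : f i = 0
    · simp [hfi]
    by_cases hgj : g j = 0
    · simp [hgj]
    rw [max_eq_right (hfg i j hfi hgj)]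
  simp only [smax, hterm, sum_ite_eq', mem_univ, if_true, ← sum_mul, hf, one_mul]

theorem smin_eq_left_of_support_le {f g : Fin N → ℝ} (hfg : ∀ i j, f i ≠ 0 → g j ≠ 0 → i ≤ j)
    (hg : ∑ j, g j = 1) : smin f g = f := by
  ext m
  have hterm : ∀ i j, (if min i j = m then f i * g j else 0) = if i = m then f i * g j else 0 := by
    intro i j
    by_cases hfi : f i = 0
    · simp [hfi]
    by_cases hgj : g j = 0
    · simp [hgj]
    rw [min_eq_left (hfg i j hfi hgj)]
  simp [smin, hterm, ← mul_sum, hg]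

end Composition

section BlockInterval

variable {N : ℕ} (p : Fin N → ℝ) (q : ℝ) (k : Fin N)

def leftBlock : Fin N → ℝ := fun i =>
  if i < k then p i / q
  else if i = k then (q - ∑ j ∈ Iio k, p j) / q
  else 0

def rightBlock : Fin N → ℝ := fun i =>
  if i < k then 0
  else if i = k then ((∑ j ∈ Iic k, p j) - q) / (1 - q)
  else p i / (1 - q)

variable {p q k}

theorem leftBlock_of_lt {i : Fin N} (h : i < k) : leftBlock p q k i = p i / q := by
  simp [leftBlock, h]

theorem leftBlock_eq_zero_of_lt {i : Fin N} (h : k < i) : leftBlock p q k i = 0 := by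
  simp [leftBlock, h.not_gt, h.ne']

theorem rightBlock_eq_zero_of_lt {i : Fin N} (h : i < k) : rightBlock p q k i = 0 := by
  simp [rightBlock, h]

theorem leftBlock_support_le_rightBlock_support (i j : Fin N) (hi : leftBlock p q k i ≠ 0)
    (hj : rightBlock p q k j ≠ 0) : i ≤ j :=
  (not_lt.mp (mt leftBlock_eq_zero_of_lt hi)).trans (not_lt.mp (mt rightBlock_eq_zero_of_lt hj))

theorem sum_leftBlock (hq : q ≠ 0) : ∑ i, leftBlock p q k i = 1 := by
  rw [← sum_subset (subset_univ (Iic k)) fun i _ hi => leftBlock_eq_zero_of_lt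
      (not_le.mp (by simpa using hi)), ← sum_Iio_add_eq_sum_Iic,
    sum_congr rfl fun i hi => leftBlock_of_lt (mem_Iio.mp hi), ← sum_div]
  simp only [leftBlock, lt_irrefl, if_false, if_true]
  field_simp
  ring

theorem smul_leftBlock_add_smul_rightBlock (hq0 : q ≠ 0) (hq1 : q ≠ 1) :
    q • leftBlock p q k + (1 - q) • rightBlock p q k = p := by
  have hq1' : 1 - q ≠ 0 := sub_ne_zero.mpr hq1.symm
  ext i
  simp only [Pi.add_apply, Pi.smul_apply, smul_eq_mul, leftBlock, rightBlock]
  rcases lt_trichotomy i k with h | rfl | h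
  · simp [h, mul_div_cancel₀ _ hq0]
  · rw [← sum_Iio_add_eq_sum_Iic]
    simp only [lt_irrefl, if_false, if_true, mul_div_cancel₀ _ hq0, mul_div_cancel₀ _ hq1']
    ring
  · simp [h.not_gt, h.ne', mul_div_cancel₀ _ hq1']

theorem sum_rightBlock (hp : ∑ i, p i = 1) (hq0 : q ≠ 0) (hq1 : q ≠ 1) :
    ∑ i, rightBlock p q k i = 1 := by
  have hsum := congr_arg (fun f => ∑ i, f i)
    (smul_leftBlock_add_smul_rightBlock (p := p) (k := k) hq0 hq1)
  simp only [Pi.add_apply, Pi.smul_apply, smul_eq_mul, sum_add_distrib, ← mul_sum,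
    sum_leftBlock hq0, hp] at hsum
  exact (mul_right_inj' (sub_ne_zero.mpr hq1.symm)).mp (by linarith)

theorem cutSwitch_eq (n : ℕ) (q : ℝ) :
    (fun i : Fin (n + 1) =>
      (if (i : ℕ) = 0 then q else 0) + (if (i : ℕ) = n + 1 - 1 then 1 - q else 0)) =
      q • Pi.single 0 1 + (1 - q) • Pi.single (Fin.last n) 1 := by
  ext i
  simp only [Pi.add_apply, Pi.smul_apply, Pi.single_apply, smul_eq_mul, mul_ite, mul_one, mul_zero,
    Fin.ext_iff, Fin.val_zero, Fin.val_last, Nat.add_sub_cancel]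

end BlockInterval

theorem block_interval_general (N : ℕ) (hN : 1 ≤ N) (p : Fin N → ℝ) (hp : IsProbVec p)
    (q : ℝ) (hq0 : 0 < q) (hq1 : q < 1) (k : Fin N)
    (c L R : Fin N → ℝ)
    (hc : c = fun i : Fin N =>
      (if (i : ℕ) = 0 then q else 0) + (if (i : ℕ) = N - 1 then 1 - q else 0))
    (hL : L = fun i =>
      if i < k then p i / q
      else if i = k then (q - ∑ j ∈ Finset.Iio k, p j) / q
      else 0)
    (hR : R = fun i =>
      if i < k then 0
      else if i = k then ((∑ j ∈ Finset.Iic k, p j) - q) / (1 - q)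
      else p i / (1 - q)) :
    p = smax L (smin c R) ∧ p = smin (smax L c) R := by
  obtain ⟨n, rfl⟩ : ∃ n, N = n + 1 := ⟨N - 1, by omega⟩
  replace hc : c = q • Pi.single 0 1 + (1 - q) • Pi.single (Fin.last n) 1 :=
    hc.trans (cutSwitch_eq n q)
  replace hL : L = leftBlock p q k := hL
  replace hR : R = rightBlock p q k := hR
  have hbot : IsBot (0 : Fin (n + 1)) := Fin.zero_le
  have htop : IsTop (Fin.last n) := Fin.le_last
  have hL1 : ∑ i, L i = 1 := hL ▸ sum_leftBlock hq0.ne'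
  have hR1 : ∑ i, R i = 1 := hR ▸ sum_rightBlock hp.2 hq0.ne' hq1.ne
  have hLR : ∀ i j, L i ≠ 0 → R j ≠ 0 → i ≤ j :=
    hL ▸ hR ▸ leftBlock_support_le_rightBlock_support
  have hp_eq : q • L + (1 - q) • R = p :=
    hL ▸ hR ▸ smul_leftBlock_add_smul_rightBlock hq0.ne' hq1.ne
  have hcR : smin c R = q • Pi.single 0 1 + (1 - q) • R := by
    rw [hc, smin_add_left, smin_smul_left, smin_smul_left, smin_single_of_isBot hbot,
      smin_single_of_isTop htop, hR1, one_smul]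
  have hLc : smax L c = q • L + (1 - q) • Pi.single (Fin.last n) 1 := by
    rw [hc, smax_add_right, smax_smul_right, smax_smul_right, smax_single_of_isBot hbot,
      smax_single_of_isTop htop, hL1, one_smul]
  constructor
  · rw [hcR, smax_add_right, smax_smul_right, smax_smul_right, smax_single_of_isBot hbot,
      smax_eq_right_of_support_le hLR hL1, hp_eq]
  · rw [hLc, smin_add_left, smin_smul_left, smin_smul_left, smin_single_of_isTop htop,
      smin_eq_left_of_support_le hLR hR1, hp_eq]

/-- Block-Interval Construction: cutting a distribution `p` at `q` (within
block `k`) yields `p = L ⊕ (c ∗ R)` and `p = (L ⊕ c) ∗ R`, where `c` is the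
cut pswitch and `L`, `R` are the left and right block-interval distributions. -/
theorem block_interval (N : ℕ) (hN : 1 ≤ N) (p : Fin N → ℝ) (hp : IsProbVec p)
    (q : ℝ) (hq0 : 0 < q) (hq1 : q < 1) (k : Fin N)
    (hkl : ∑ i ∈ Finset.Iio k, p i ≤ q) (hkr : q ≤ ∑ i ∈ Finset.Iic k, p i)
    (c L R : Fin N → ℝ)
    (hc : c = fun i : Fin N =>
      (if (i : ℕ) = 0 then q else 0) + (if (i : ℕ) = N - 1 then 1 - q else 0))
    (hL : L = fun i =>
      if i < k then p i / q
      else if i = k then (q - ∑ j ∈ Finset.Iio k, p j) / q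
      else 0)
    (hR : R = fun i =>
      if i < k then 0
      else if i = k then ((∑ j ∈ Finset.Iic k, p j) - q) / (1 - q)
      else p i / (1 - q)) :
    p = smax L (smin c R) ∧ p = smin (smax L c) R :=
  block_interval_general N hN p hp q hq0 hq1 k c L R hc hL hR
end
end
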